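/- Suppose g : ℝ → ι → ℝ (with ι finite) satisfies the coupled mode ODEs (g_u)'(t) = -λ_u(t) g_u(t) - ∑_{v ≠ u} g_v(t) Ω(t)(v,u), where Ω(t) is antisymmetric for each t. Let S be a subset of ι and E_S(t) := ½ ∑_{u ∈ S} g_u(t)². Then E_S'(t) = -∑_{u ∈ S} λ_u(t) g_u(t)² - ∑_{u ∈ S} ∑_{v ∉ S} g_u(t) g_v(t) Ω(t)(v,u). -/

import Mathlib

/-!
Differentiating `E_S` gives `∑_{u ∈ S} g_u g_u'`. In the coupling part of this sum, the terms
`g_u g_v Ω(v,u)` with both `u, v ∈ S` cancel in pairs by antisymmetry of `Ω`, so only the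
exchange with modes outside `S` survives.
-/

open Finset

section Antisymmetric

variable {R ι : Type*} [CommRing R] [NoZeroDivisors R] [CharZero R] {Ω : ι → ι → R}

theorem diag_eq_zero_of_antisymm (hΩ : ∀ u v, Ω v u = -Ω u v) (u : ι) : Ω u u = 0 :=
  self_eq_neg.mp (hΩ u u)

theorem sum_sum_mul_mul_eq_zero_of_antisymm (hΩ : ∀ u v, Ω v u = -Ω u v) (S : Finset ι)
    (x : ι → R) : ∑ u ∈ S, ∑ v ∈ S, x u * x v * Ω v u = 0 := by
  refine self_eq_neg.mp ?_
  calc ∑ u ∈ S, ∑ v ∈ S, x u * x v * Ω v u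
      = ∑ u ∈ S, ∑ v ∈ S, x v * x u * Ω u v := sum_comm
    _ = -∑ u ∈ S, ∑ v ∈ S, x u * x v * Ω v u := by
      simp only [← sum_neg_distrib]
      exact sum_congr rfl fun _ _ => sum_congr rfl fun _ _ => by rw [hΩ]; ring

theorem sum_mul_sum_erase_eq_sum_sum_compl [Fintype ι] [DecidableEq ι]
    (hΩ : ∀ u v, Ω v u = -Ω u v) (S : Finset ι) (x : ι → R) :
    ∑ u ∈ S, x u * ∑ v ∈ univ.erase u, x v * Ω v u
      = ∑ u ∈ S, ∑ v ∈ Sᶜ, x u * x v * Ω v u := by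
  have hsplit : ∀ u, ∑ v ∈ univ.erase u, x v * Ω v u
      = ∑ v ∈ S, x v * Ω v u + ∑ v ∈ Sᶜ, x v * Ω v u := fun u => by
    rw [sum_erase _ (by simp [diag_eq_zero_of_antisymm hΩ u]), sum_add_sum_compl]
  simp only [hsplit, mul_add, mul_sum, ← mul_assoc, sum_add_distrib,
    sum_sum_mul_mul_eq_zero_of_antisymm hΩ, zero_add]

end Antisymmetric

theorem HasDerivAt.half_sum_sq {ι : Type*} (S : Finset ι) {g : ℝ → ι → ℝ} {g' : ι → ℝ}
    {t : ℝ} (hg : ∀ u ∈ S, HasDerivAt (fun s => g s u) (g' u) t) :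
    HasDerivAt (fun s => (1 / 2 : ℝ) * ∑ u ∈ S, g s u ^ 2) (∑ u ∈ S, g t u * g' u) t := by
  refine ((HasDerivAt.fun_sum fun u hu => (hg u hu).fun_pow 2).const_mul
    (1 / 2 : ℝ)).congr_deriv ?_
  rw [mul_sum]
  exact sum_congr rfl fun u _ => by ring

theorem stmt_6 {ι : Type*} [Fintype ι] [DecidableEq ι]
    (lam : ℝ → ι → ℝ) (Ω : ℝ → ι → ι → ℝ)
    (hΩ : ∀ t u v, Ω t v u = -Ω t u v)
    (g : ℝ → ι → ℝ)
    (hode : ∀ t u, HasDerivAt (fun s => g s u)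
      (-(lam t u) * g t u - ∑ v ∈ Finset.univ.erase u, g t v * Ω t v u) t)
    (S : Finset ι) :
    ∀ t, HasDerivAt (fun s => (1 / 2 : ℝ) * ∑ u ∈ S, (g s u) ^ 2)
      (-∑ u ∈ S, lam t u * (g t u) ^ 2
        - ∑ u ∈ S, ∑ v ∈ Sᶜ, g t u * g t v * Ω t v u) t := by
  intro t
  convert HasDerivAt.half_sum_sq S fun u _ => hode t u using 1
  rw [← sum_mul_sum_erase_eq_sum_sum_compl (hΩ t), ← sum_neg_distrib, ← sum_sub_distrib]
  exact sum_congr rfl fun u _ => by ring
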